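/- Let (L, Δ₀, φ_L, α) be a Hom-pre-Lie CoDer pair over K. Define Δ = Δ₀ − τ∘Δ₀ : L → L ⊗ L. Then (L, Δ, φ_L, α) is a Hom-Lie CoDer pair; that is, Δ = −τ∘Δ, the Hom-co-Jacobi identity (1 + ξ + ξ²)∘(α ⊗ Δ)∘Δ = 0 holds, and φ_L is an α-coderivation with respect to Δ. -/
import Mathlib

open scoped TensorProduct

/-- The cyclic permutation ξ : x⊗y⊗z ↦ y⊗z⊗x on `L ⊗ (L ⊗ L)`. -/
noncomputable def cyc (K : Type*) [Field K] (L : Type*) [AddCommGroup L] [Module K L] :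
    L ⊗[K] (L ⊗[K] L) →ₗ[K] L ⊗[K] (L ⊗[K] L) :=
  (TensorProduct.assoc K L L L).toLinearMap ∘ₗ (TensorProduct.comm K L (L ⊗[K] L)).toLinearMap

/-- The transposition τ¹² : x⊗y⊗z ↦ y⊗x⊗z on `L ⊗ (L ⊗ L)`. -/
noncomputable def tau12 (K : Type*) [Field K] (L : Type*) [AddCommGroup L] [Module K L] :
    L ⊗[K] (L ⊗[K] L) →ₗ[K] L ⊗[K] (L ⊗[K] L) :=
  (TensorProduct.assoc K L L L).toLinearMap
    ∘ₗ TensorProduct.map (TensorProduct.comm K L L).toLinearMap (LinearMap.id : L →ₗ[K] L)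
    ∘ₗ (TensorProduct.assoc K L L L).symm.toLinearMap

/-- A Hom-Lie coalgebra: Δ = −τ∘Δ and (1 + ξ + ξ²)∘(α ⊗ Δ)∘Δ = 0. -/
def IsHomLieCoalgebra {K : Type*} [Field K] {L : Type*} [AddCommGroup L] [Module K L]
    (Δ : L →ₗ[K] L ⊗[K] L) (α : L →ₗ[K] L) : Prop :=
  ((TensorProduct.comm K L L).toLinearMap ∘ₗ Δ = -Δ) ∧
  ((LinearMap.id + cyc K L + cyc K L ∘ₗ cyc K L) ∘ₗ (TensorProduct.map α Δ ∘ₗ Δ) = 0)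

/-- φ is an α-coderivation of Δ. -/
def IsCoderivation {K : Type*} [Field K] {L : Type*} [AddCommGroup L] [Module K L]
    (Δ : L →ₗ[K] L ⊗[K] L) (α φ : L →ₗ[K] L) : Prop :=
  Δ ∘ₗ φ = TensorProduct.map φ α ∘ₗ Δ + TensorProduct.map α φ ∘ₗ Δ

/-- A Hom-Lie CoDer pair (L, Δ, φ, α). -/
def IsHomLieCoDerPair {K : Type*} [Field K] {L : Type*} [AddCommGroup L] [Module K L]
    (Δ : L →ₗ[K] L ⊗[K] L) (φ α : L →ₗ[K] L) : Prop :=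
  IsHomLieCoalgebra Δ α ∧ IsCoderivation Δ α φ

/-- A Hom-pre-Lie coalgebra: (1 − τ¹²)∘((Δ₀ ⊗ α)∘Δ₀ − (α ⊗ Δ₀)∘Δ₀) = 0,
identifying (L ⊗ L) ⊗ L ≅ L ⊗ (L ⊗ L) via the associator. -/
def IsHomPreLieCoalgebra {K : Type*} [Field K] {L : Type*} [AddCommGroup L] [Module K L]
    (Δ₀ : L →ₗ[K] L ⊗[K] L) (α : L →ₗ[K] L) : Prop :=
  (LinearMap.id - tau12 K L) ∘ₗ
    ((TensorProduct.assoc K L L L).toLinearMap ∘ₗ TensorProduct.map Δ₀ α ∘ₗ Δ₀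
      - TensorProduct.map α Δ₀ ∘ₗ Δ₀) = 0

section Aux

variable {K : Type*} [Field K] {L : Type*} [AddCommGroup L] [Module K L]

lemma cyc_tmul (x y z : L) : cyc K L (x ⊗ₜ (y ⊗ₜ z)) = y ⊗ₜ (z ⊗ₜ x) := by
  simp [cyc]

lemma tau12_tmul (x y z : L) : tau12 K L (x ⊗ₜ (y ⊗ₜ z)) = y ⊗ₜ[K] (x ⊗ₜ z) := by
  simp [tau12]

/-- `τ²³ = id ⊗ τ`. -/
noncomputable def t23 (K : Type*) [Field K] (L : Type*) [AddCommGroup L] [Module K L] :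
    L ⊗[K] (L ⊗[K] L) →ₗ[K] L ⊗[K] (L ⊗[K] L) :=
  TensorProduct.map LinearMap.id (TensorProduct.comm K L L).toLinearMap

lemma t23_tmul (x y z : L) : t23 K L (x ⊗ₜ (y ⊗ₜ z)) = x ⊗ₜ[K] (z ⊗ₜ y) := by
  simp [t23]

-- S ∘ ξ² = S
lemma opA : ((LinearMap.id + cyc K L + cyc K L ∘ₗ cyc K L)) ∘ₗ (cyc K L ∘ₗ cyc K L)
    = ((LinearMap.id + cyc K L + cyc K L ∘ₗ cyc K L) : L ⊗[K] (L ⊗[K] L) →ₗ[K] _) := by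
  ext x y z
  simp [cyc_tmul]
  abel

-- S ∘ τ²³ ∘ ξ² = S ∘ τ²³
lemma opB : ((LinearMap.id + cyc K L + cyc K L ∘ₗ cyc K L) ∘ₗ t23 K L) ∘ₗ (cyc K L ∘ₗ cyc K L)
    = (LinearMap.id + cyc K L + cyc K L ∘ₗ cyc K L) ∘ₗ t23 K L := by
  ext x y z
  simp [cyc_tmul, t23_tmul]
  abel

-- S ∘ τ²³ = S ∘ τ¹²
lemma opC : (LinearMap.id + cyc K L + cyc K L ∘ₗ cyc K L) ∘ₗ t23 K L
    = (LinearMap.id + cyc K L + cyc K L ∘ₗ cyc K L) ∘ₗ tau12 K L := by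
  ext x y z
  simp [cyc_tmul, t23_tmul, tau12_tmul]
  abel

-- naturality of comm
lemma comm_natural {M N P Q : Type*} [AddCommGroup M] [Module K M] [AddCommGroup N] [Module K N]
    [AddCommGroup P] [Module K P] [AddCommGroup Q] [Module K Q]
    (f : M →ₗ[K] P) (g : N →ₗ[K] Q) :
    TensorProduct.map g f ∘ₗ (TensorProduct.comm K M N).toLinearMap
      = (TensorProduct.comm K P Q).toLinearMap ∘ₗ TensorProduct.map f g := by
  ext x y
  simp

-- ξ² ∘ assoc = comm
lemma ccassoc (u : (L ⊗[K] L) ⊗[K] L) :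
    cyc K L (cyc K L ((TensorProduct.assoc K L L L) u))
      = (TensorProduct.comm K (L ⊗[K] L) L) u := by
  have h : (cyc K L ∘ₗ cyc K L) ∘ₗ (TensorProduct.assoc K L L L).toLinearMap
      = (TensorProduct.comm K (L ⊗[K] L) L).toLinearMap := by
    ext x y z
    simp [cyc_tmul]
  have := LinearMap.congr_fun h u
  simpa using this

-- (α ⊗ Δ₀) ∘ τ = ξ² ∘ assoc ∘ (Δ₀ ⊗ α)  (pointwise)
lemma key (Δ₀ : L →ₗ[K] L ⊗[K] L) (α : L →ₗ[K] L) (u : L ⊗[K] L) :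
    TensorProduct.map α Δ₀ ((TensorProduct.comm K L L) u)
      = cyc K L (cyc K L ((TensorProduct.assoc K L L L) (TensorProduct.map Δ₀ α u))) := by
  have h1 := LinearMap.congr_fun (comm_natural (K := K) Δ₀ α) u
  simp only [LinearMap.comp_apply, LinearEquiv.coe_coe] at h1
  rw [h1, ccassoc]

lemma map_sub_right (f : L →ₗ[K] L) (g h : L →ₗ[K] L ⊗[K] L) (u : L ⊗[K] L) :
    TensorProduct.map f (g - h) u = TensorProduct.map f g u - TensorProduct.map f h u := by
  have : TensorProduct.map f (g - h) = TensorProduct.map f g - TensorProduct.map f h := by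
    ext x y
    simp [TensorProduct.tmul_sub]
  rw [this]; rfl

lemma map_comm_comp (Δ₀ : L →ₗ[K] L ⊗[K] L) (α : L →ₗ[K] L) (u : L ⊗[K] L) :
    TensorProduct.map α ((TensorProduct.comm K L L).toLinearMap ∘ₗ Δ₀) u
      = t23 K L (TensorProduct.map α Δ₀ u) := by
  have h : TensorProduct.map α ((TensorProduct.comm K L L).toLinearMap ∘ₗ Δ₀)
      = t23 K L ∘ₗ TensorProduct.map α Δ₀ := by
    ext x y
    simp [t23]
  rw [h]; rfl

lemma comm_comm (u : L ⊗[K] L) :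
    (TensorProduct.comm K L L) ((TensorProduct.comm K L L) u) = u := by
  induction u using TensorProduct.induction_on with
  | zero => simp
  | tmul x y => simp
  | add a b ha hb => simp [ha, hb]

end Aux

/-- If (L, Δ₀, φ_L, α) is a Hom-pre-Lie CoDer pair, then the
commutator Δ = Δ₀ − τ∘Δ₀ makes (L, Δ, φ_L, α) a Hom-Lie CoDer pair. -/
theorem homPreLieCoDerPair_commutator
    {K : Type*} [Field K] [CharZero K] {L : Type*} [AddCommGroup L] [Module K L]
    (Δ₀ : L →ₗ[K] L ⊗[K] L) (φL α : L →ₗ[K] L)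
    (hpre : IsHomPreLieCoalgebra Δ₀ α)
    (hcoder : IsCoderivation Δ₀ α φL) :
    IsHomLieCoDerPair (Δ₀ - (TensorProduct.comm K L L).toLinearMap ∘ₗ Δ₀) φL α := by
  set τ := (TensorProduct.comm K L L).toLinearMap with hτ
  refine ⟨⟨?_, ?_⟩, ?_⟩
  · -- antisymmetry
    ext x
    simp [LinearMap.comp_apply, hτ, comm_comm]
  · -- Hom-co-Jacobi
    ext x
    set S := (LinearMap.id + cyc K L + cyc K L ∘ₗ cyc K L) with hS
    set a := (TensorProduct.assoc K L L L) (TensorProduct.map Δ₀ α (Δ₀ x)) with ha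
    set b := TensorProduct.map α Δ₀ (Δ₀ x) with hb
    have eA : ∀ u : L ⊗[K] (L ⊗[K] L), S (cyc K L (cyc K L u)) = S u := by
      intro u
      have := LinearMap.congr_fun (opA (K := K) (L := L)) u
      simpa [← hS] using this
    have eB : ∀ u : L ⊗[K] (L ⊗[K] L), S (t23 K L (cyc K L (cyc K L u))) = S (t23 K L u) := by
      intro u
      have := LinearMap.congr_fun (opB (K := K) (L := L)) u
      simpa [← hS] using this
    have eC : ∀ u : L ⊗[K] (L ⊗[K] L), S (t23 K L u) = S (tau12 K L u) := by
      intro u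
      have := LinearMap.congr_fun (opC (K := K) (L := L)) u
      simpa [← hS] using this
    -- pre-Lie identity at x
    have raw : (a - tau12 K L a) - (b - tau12 K L b) = 0 := by
      have h := LinearMap.congr_fun hpre x
      simpa [IsHomPreLieCoalgebra, LinearMap.comp_apply, LinearMap.sub_apply, map_sub,
        ha, hb] using h
    have h2 : a - tau12 K L a = b - tau12 K L b := sub_eq_zero.mp raw
    have h4 : tau12 K L b - tau12 K L a = b - a := by
      have h3 : a - b = tau12 K L a - tau12 K L b := sub_eq_sub_iff_sub_eq_sub.mp h2
      rw [← neg_sub (tau12 K L a) (tau12 K L b), ← h3, neg_sub]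
    -- compute the value
    have hval : TensorProduct.map α (Δ₀ - τ ∘ₗ Δ₀) ((Δ₀ - τ ∘ₗ Δ₀) x)
        = (b - cyc K L (cyc K L a)) - t23 K L (b - cyc K L (cyc K L a)) := by
      have e1 : (Δ₀ - τ ∘ₗ Δ₀) x = Δ₀ x - τ (Δ₀ x) := rfl
      rw [e1, map_sub]
      have e2 : ∀ u : L ⊗[K] L, TensorProduct.map α (Δ₀ - τ ∘ₗ Δ₀) u
          = TensorProduct.map α Δ₀ u - t23 K L (TensorProduct.map α Δ₀ u) := by
        intro u
        rw [hτ, map_sub_right, map_comm_comp]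
      rw [e2, e2]
      have e3 : TensorProduct.map α Δ₀ (τ (Δ₀ x)) = cyc K L (cyc K L a) := by
        rw [hτ]
        simp only [LinearEquiv.coe_coe]
        rw [key, ha]
      rw [e3, ← hb, map_sub (t23 K L)]
      abel
    simp only [LinearMap.comp_apply, LinearMap.zero_apply]
    rw [hval]
    rw [map_sub S, map_sub S, map_sub (t23 K L), map_sub S, eA, eB, eC, eC]
    -- goal: (S b - S a) - (S (tau12 b) - S (tau12 a)) = 0
    rw [← map_sub S (tau12 K L b), h4, map_sub S]
    abel
  · -- coderivation
    ext x
    have hc := LinearMap.congr_fun hcoder x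
    simp only [LinearMap.comp_apply, LinearMap.add_apply] at hc
    simp only [LinearMap.sub_apply, LinearMap.comp_apply, LinearMap.add_apply]
    rw [hc]
    have nat1 : τ (TensorProduct.map φL α (Δ₀ x)) = TensorProduct.map α φL (τ (Δ₀ x)) := by
      have := LinearMap.congr_fun (comm_natural (K := K) φL α) (Δ₀ x)
      simpa [hτ] using this.symm
    have nat2 : τ (TensorProduct.map α φL (Δ₀ x)) = TensorProduct.map φL α (τ (Δ₀ x)) := by
      have := LinearMap.congr_fun (comm_natural (K := K) α φL) (Δ₀ x)
      simpa [hτ] using this.symm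
    rw [map_add, nat1, nat2, map_sub, map_sub]
    abel
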